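/- arXiv:2003.10327 — 5 statements merged into one kernel-verified Lean document; each statement's English description precedes it below -/
import Mathlib

section
/- Let F : ℝⁿ → ℝⁿ be locally Lipschitz, Ω ⊆ ℝⁿ nonempty closed, ρ > 0, and ψ(x) = sup_{y∈Ω} (⟨F(x), x-y⟩ - (ρ/2)‖x-y‖²). Then the regularized gap function ψ is locally Lipschitz on ℝⁿ. -/
/-!
Completing the square gives
`⟪F x, x - y⟫ - ρ/2 ‖x - y‖² = ‖F x‖²/(2ρ) - ρ/2 ‖(x - ρ⁻¹ F x) - y‖²`,
so `ψ x = ‖F x‖²/(2ρ) - ρ/2 · dist(x - ρ⁻¹ F x, Ω)²`. This is a smooth function of `‖F x‖` and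
of the distance from `x - ρ⁻¹ F x` to `Ω`, both locally Lipschitz in `x` because the distance
function to a set is `1`-Lipschitz.
-/

open Metric

theorem sSup_image_sub_mul_dist_sq {α : Type*} [PseudoMetricSpace α] {s : Set α}
    (hs : s.Nonempty) (c : ℝ) {k : ℝ} (hk : 0 ≤ k) (z : α) :
    sSup ((fun y => c - k * dist z y ^ 2) '' s) = c - k * infDist z s ^ 2 := by
  have hanti : AntitoneOn (fun t : ℝ => c - k * t ^ 2) (Set.Ici 0) := fun t ht t' _ htt' => by
    simp only
    gcongr
  have hdist : dist z '' s ⊆ Set.Ici 0 := Set.image_subset_iff.2 fun y _ => dist_nonneg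
  rw [infDist_eq_iInf, ← sInf_image', (hanti.mono hdist).map_csInf_of_continuousWithinAt
    (by fun_prop) (hs.image _) ⟨0, fun t ht => hdist ht⟩, Set.image_image]

section

variable {E : Type*} [NormedAddCommGroup E] [InnerProductSpace ℝ E]

theorem real_inner_sub_half_mul_norm_sq_eq {ρ : ℝ} (hρ : ρ ≠ 0) (v d : E) :
    inner ℝ v d - ρ / 2 * ‖d‖ ^ 2 = ‖v‖ ^ 2 / (2 * ρ) - ρ / 2 * ‖d - ρ⁻¹ • v‖ ^ 2 := by
  rw [norm_sub_sq_real, norm_smul, inner_smul_right, real_inner_comm, Real.norm_eq_abs, mul_pow,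
    sq_abs]
  field_simp
  ring

noncomputable def regularizedGap (F : E → E) (s : Set E) (ρ : ℝ) (x : E) : ℝ :=
  sSup ((fun y => inner ℝ (F x) (x - y) - ρ / 2 * ‖x - y‖ ^ 2) '' s)

variable {F : E → E} {s : Set E} {ρ : ℝ}

theorem regularizedGap_eq_infDist (hs : s.Nonempty) (hρ : 0 < ρ) (x : E) :
    regularizedGap F s ρ x = ‖F x‖ ^ 2 / (2 * ρ) - ρ / 2 * infDist (x - ρ⁻¹ • F x) s ^ 2 := by
  have hcompl (y : E) : inner ℝ (F x) (x - y) - ρ / 2 * ‖x - y‖ ^ 2 =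
      ‖F x‖ ^ 2 / (2 * ρ) - ρ / 2 * dist (x - ρ⁻¹ • F x) y ^ 2 := by
    rw [real_inner_sub_half_mul_norm_sq_eq hρ.ne', dist_eq_norm, sub_right_comm]
  simp_rw [regularizedGap, hcompl]
  exact sSup_image_sub_mul_dist_sq hs _ (by positivity) _

theorem LocallyLipschitz.regularizedGap (hF : LocallyLipschitz F) (hs : s.Nonempty)
    (hρ : 0 < ρ) : LocallyLipschitz (regularizedGap F s ρ) := by
  rw [funext (regularizedGap_eq_infDist hs hρ)]
  have hshift : ContDiff ℝ 1 fun p : E × E => p.1 - ρ⁻¹ • p.2 := by fun_prop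
  have hquad : ContDiff ℝ 1 fun p : ℝ × ℝ => p.1 ^ 2 / (2 * ρ) - ρ / 2 * p.2 ^ 2 := by fun_prop
  have hnorm : LocallyLipschitz fun x => ‖F x‖ :=
    lipschitzWith_one_norm.locallyLipschitz.comp hF
  have hdist : LocallyLipschitz fun x => infDist (x - ρ⁻¹ • F x) s :=
    (lipschitz_infDist_pt s).locallyLipschitz.comp <|
      hshift.locallyLipschitz.comp (LocallyLipschitz.id.prodMk hF)
  exact (hquad.locallyLipschitz.comp (hnorm.prodMk hdist) :)

end

theorem stmt3_general {n : ℕ} (F : EuclideanSpace ℝ (Fin n) → EuclideanSpace ℝ (Fin n))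
    (hF : LocallyLipschitz F) (Ω : Set (EuclideanSpace ℝ (Fin n))) (hΩne : Ω.Nonempty)
    (ρ : ℝ) (hρ : 0 < ρ)
    (ψ : EuclideanSpace ℝ (Fin n) → ℝ)
    (hψ : ∀ x, ψ x = sSup ((fun y => (inner ℝ (F x) (x - y) : ℝ) - ρ / 2 * ‖x - y‖ ^ 2) '' Ω)) :
    LocallyLipschitz ψ := by
  obtain rfl : ψ = regularizedGap F Ω ρ := funext hψ
  exact hF.regularizedGap hΩne hρ

/-- If `F` is locally Lipschitz, then the regularized gap function `ψ` is locally Lipschitz. -/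
theorem stmt3 {n : ℕ} (F : EuclideanSpace ℝ (Fin n) → EuclideanSpace ℝ (Fin n))
    (hF : LocallyLipschitz F) (Ω : Set (EuclideanSpace ℝ (Fin n))) (hΩne : Ω.Nonempty)
    (hΩcl : IsClosed Ω) (ρ : ℝ) (hρ : 0 < ρ)
    (ψ : EuclideanSpace ℝ (Fin n) → ℝ)
    (hψ : ∀ x, ψ x = sSup ((fun y => (inner ℝ (F x) (x - y) : ℝ) - ρ / 2 * ‖x - y‖ ^ 2) '' Ω)) :
    LocallyLipschitz ψ :=
  stmt3_general F hF Ω hΩne ρ hρ ψ hψ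
end

section
/- Let F : ℝⁿ → ℝⁿ be continuous, Ω ⊆ ℝⁿ nonempty closed convex, ρ > 0, and ψ(x) = sup_{y∈Ω} (⟨F(x), x-y⟩ - (ρ/2)‖x-y‖²). Then for x ∈ Ω, ψ(x) = 0 if and only if x solves the variational inequality, i.e. ⟨F(x), y - x⟩ ≥ 0 for all y ∈ Ω. -/
/-!
For `y ∈ Ω` the term `⟪F x, x - y⟫ - ρ/2 ‖x - y‖²` vanishes at `y = x`, so `ψ x ≥ 0`, and
`ψ x = 0` says exactly that every term is `≤ 0`. A solution of the variational inequality makes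
every term `≤ 0` outright. Conversely, testing the terms at `x + t (y - x) ∈ Ω` gives
`t ⟪F x, y - x⟫ ≥ -(ρ/2) t² ‖y - x‖²`; dividing by `t > 0` and letting `t → 0⁺` yields
`⟪F x, y - x⟫ ≥ 0`.
-/

open Set Filter Topology RealInnerProductSpace

lemma csSup_eq_iff_forall_le_of_mem {α : Type*} [ConditionallyCompleteLattice α] {s : Set α}
    {a : α} (ha : a ∈ s) (hs : BddAbove s) : sSup s = a ↔ ∀ b ∈ s, b ≤ a :=
  ⟨fun h _ hb => h ▸ le_csSup hs hb, fun h => IsGreatest.csSup_eq ⟨ha, h⟩⟩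

lemma nonpos_of_forall_le_mul_of_mem_Ioc {a b : ℝ} (h : ∀ t ∈ Ioc (0 : ℝ) 1, b ≤ a * t) :
    b ≤ 0 := by
  have hlim : Tendsto (fun t => a * t) (𝓝[>] 0) (𝓝 0) := by
    simpa using ((continuous_const_mul a).tendsto 0).mono_left nhdsWithin_le_nhds
  exact ge_of_tendsto hlim (eventually_of_mem (Ioc_mem_nhdsGT one_pos) h)

section InnerProductSpace

variable {E : Type*} [NormedAddCommGroup E] [InnerProductSpace ℝ E]

/-- Completing the square: `ρ ‖w‖² - 2 ⟪v, w⟫ + ‖v‖² / ρ = ‖√ρ w - v / √ρ‖² ≥ 0`. -/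
lemma inner_sub_mul_norm_sq_le {ρ : ℝ} (hρ : 0 < ρ) (v w : E) :
    ⟪v, w⟫ - ρ / 2 * ‖w‖ ^ 2 ≤ ‖v‖ ^ 2 / (2 * ρ) := by
  rw [le_div_iff₀ (by positivity)]
  nlinarith [real_inner_le_norm v w, sq_nonneg (ρ * ‖w‖ - ‖v‖)]

lemma inner_sub_mul_norm_sq_nonpos {v x y : E} {ρ : ℝ} (hρ : 0 ≤ ρ) (h : 0 ≤ ⟪v, y - x⟫) :
    ⟪v, x - y⟫ - ρ / 2 * ‖x - y‖ ^ 2 ≤ 0 := by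
  rw [← neg_sub y x, inner_neg_right]
  nlinarith [sq_nonneg ‖x - y‖]

lemma Convex.inner_nonneg_of_forall_inner_sub_mul_norm_sq_nonpos {Ω : Set E} (hΩ : Convex ℝ Ω)
    {v x : E} (hx : x ∈ Ω) {ρ : ℝ}
    (h : ∀ z ∈ Ω, ⟪v, x - z⟫ - ρ / 2 * ‖x - z‖ ^ 2 ≤ 0) {y : E} (hy : y ∈ Ω) :
    0 ≤ ⟪v, y - x⟫ := by
  suffices -⟪v, y - x⟫ ≤ 0 by linarith
  refine nonpos_of_forall_le_mul_of_mem_Ioc (a := ρ / 2 * ‖y - x‖ ^ 2) fun t ht => ?_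
  have hz := h _ (hΩ.add_smul_sub_mem hx hy (Ioc_subset_Icc_self ht))
  have hxz : x - (x + t • (y - x)) = -(t • (y - x)) := by abel
  rw [hxz, inner_neg_right, inner_smul_right, norm_neg, norm_smul, Real.norm_of_nonneg ht.1.le,
    mul_pow] at hz
  nlinarith [ht.1]

end InnerProductSpace

theorem stmt5_general {n : ℕ} (F : EuclideanSpace ℝ (Fin n) → EuclideanSpace ℝ (Fin n))
    (Ω : Set (EuclideanSpace ℝ (Fin n)))
    (hΩcv : Convex ℝ Ω) (ρ : ℝ) (hρ : 0 < ρ)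
    (ψ : EuclideanSpace ℝ (Fin n) → ℝ)
    (hψ : ∀ x, ψ x = sSup ((fun y => (inner ℝ (F x) (x - y) : ℝ) - ρ / 2 * ‖x - y‖ ^ 2) '' Ω)) :
    ∀ x ∈ Ω, (ψ x = 0 ↔ ∀ y ∈ Ω, 0 ≤ (inner ℝ (F x) (y - x) : ℝ)) := by
  intro x hx
  have hzero : (0 : ℝ) ∈ (fun y => ⟪F x, x - y⟫ - ρ / 2 * ‖x - y‖ ^ 2) '' Ω :=
    ⟨x, hx, by simp⟩
  have hbdd : BddAbove ((fun y => ⟪F x, x - y⟫ - ρ / 2 * ‖x - y‖ ^ 2) '' Ω) :=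
    ⟨_, forall_mem_image.2 fun y _ => inner_sub_mul_norm_sq_le hρ (F x) (x - y)⟩
  rw [hψ x, csSup_eq_iff_forall_le_of_mem hzero hbdd, forall_mem_image]
  exact ⟨fun h _ => hΩcv.inner_nonneg_of_forall_inner_sub_mul_norm_sq_nonpos hx h,
    fun h y hy => inner_sub_mul_norm_sq_nonpos hρ.le (h y hy)⟩

/-- For `x ∈ Ω`, `ψ(x) = 0` iff `x` solves the variational inequality
`⟨F(x), y - x⟩ ≥ 0` for all `y ∈ Ω`. -/
theorem stmt5 {n : ℕ} (F : EuclideanSpace ℝ (Fin n) → EuclideanSpace ℝ (Fin n))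
    (hF : Continuous F) (Ω : Set (EuclideanSpace ℝ (Fin n))) (hΩne : Ω.Nonempty)
    (hΩcl : IsClosed Ω) (hΩcv : Convex ℝ Ω) (ρ : ℝ) (hρ : 0 < ρ)
    (ψ : EuclideanSpace ℝ (Fin n) → ℝ)
    (hψ : ∀ x, ψ x = sSup ((fun y => (inner ℝ (F x) (x - y) : ℝ) - ρ / 2 * ‖x - y‖ ^ 2) '' Ω)) :
    ∀ x ∈ Ω, (ψ x = 0 ↔ ∀ y ∈ Ω, 0 ≤ (inner ℝ (F x) (y - x) : ℝ)) :=
  stmt5_general F Ω hΩcv ρ hρ ψ hψ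
end

section
/- Let Ω = {x ∈ ℝⁿ : gᵢ(x) ≤ 0 (i = 1,…,r), hⱼ(x) = 0 (j = 1,…,s)} with gᵢ, hⱼ continuously differentiable, and suppose the Mangasarian–Fromovitz constraint qualification holds on Ω. Suppose {xᵏ} ⊆ Ω converges to x̄ ∈ Ω and vᵏ = Σᵢ μᵢᵏ ∇gᵢ(xᵏ) + Σⱼ κⱼᵏ ∇hⱼ(xᵏ) with μᵢᵏ ≥ 0, μᵢᵏ gᵢ(xᵏ) = 0, and the sequence {vᵏ} is bounded. Then the multiplier sequences {μᵏ} ⊆ ℝʳ and {κᵏ} ⊆ ℝˢ are bounded. -/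
/-!
Let `Lₓ (μ, κ) = ∑ μᵢ ∇gᵢ(x) + ∑ κⱼ ∇hⱼ(x)`. Pairing with the MFCQ direction shows that `L_xbar`
vanishes only at `0` on the cone of nonnegative multipliers complementary to `g(xbar)`, so by
compactness of the unit sphere of that cone, `m ‖c‖ ≤ ‖L_xbar c‖` on it for some `m > 0`. As
`L_{xᵏ} → L_xbar` in operator norm, eventually `m / 2 ‖c‖ ≤ ‖L_{xᵏ} c‖` on the cone; and eventually
`(μᵏ, κᵏ)` lies in the cone, since constraints inactive at `xbar` stay inactive near it. Hence
`‖(μᵏ, κᵏ)‖ ≤ 2 ‖vᵏ‖ / m` for large `k`.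
-/

open Filter Topology

theorem ContDiff.continuous_gradient {F : Type*} [NormedAddCommGroup F] [InnerProductSpace ℝ F]
    [CompleteSpace F] {f : F → ℝ} (hf : ContDiff ℝ 1 f) : Continuous (gradient f) :=
  (InnerProductSpace.toDual ℝ F).symm.continuous.comp (hf.continuous_fderiv one_ne_zero)

section Cone

variable {V E : Type*} [NormedAddCommGroup V] [NormedSpace ℝ V]
  [NormedAddCommGroup E] [NormedSpace ℝ E]

theorem exists_pos_mul_norm_le_norm_apply [FiniteDimensional ℝ V] {K : Set V} (hK : IsClosed K)
    (hK_smul : ∀ c ∈ K, ∀ t : ℝ, 0 < t → t • c ∈ K) {L : V →L[ℝ] E}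
    (hL : ∀ c ∈ K, L c = 0 → c = 0) :
    ∃ m > 0, ∀ c ∈ K, m * ‖c‖ ≤ ‖L c‖ := by
  have hpos : ∀ c ∈ K ∩ Metric.sphere 0 1, 0 < ‖L c‖ := by
    rintro c ⟨hcK, hc⟩
    refine norm_pos_iff.2 fun hLc => ?_
    simp [hL c hcK hLc] at hc
  obtain ⟨m, hm, hmL⟩ := ((isCompact_sphere (0 : V) 1).inter_left hK).exists_forall_le'
    (by fun_prop) hpos
  refine ⟨m, hm, fun c hc => ?_⟩
  rcases eq_or_ne c 0 with rfl | hc0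
  · simp
  have hnorm : 0 < ‖c‖ := norm_pos_iff.2 hc0
  have hunit : ‖c‖⁻¹ • c ∈ K ∩ Metric.sphere 0 1 :=
    ⟨hK_smul c hc _ (inv_pos.2 hnorm), by simp [norm_smul, hnorm.ne']⟩
  have := hmL _ hunit
  rw [map_smul, norm_smul, norm_inv, norm_norm, le_inv_mul_iff₀ hnorm] at this
  linarith

theorem eventually_mul_norm_le_norm_apply {ι : Type*} {l : Filter ι} {K : Set V}
    {L : V →L[ℝ] E} {m : ℝ} (hm : 0 < m) (hLK : ∀ c ∈ K, m * ‖c‖ ≤ ‖L c‖)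
    {T : ι → V →L[ℝ] E} (hT : Tendsto T l (𝓝 L)) :
    ∀ᶠ k in l, ∀ c ∈ K, m / 2 * ‖c‖ ≤ ‖T k c‖ := by
  filter_upwards [hT.eventually (Metric.ball_mem_nhds L (half_pos hm))] with k hk c hc
  rw [dist_eq_norm] at hk
  have hdiff : ‖L c‖ - ‖T k c‖ ≤ m / 2 * ‖c‖ :=
    calc ‖L c‖ - ‖T k c‖ ≤ ‖(T k - L) c‖ := by
          rw [sub_apply, norm_sub_rev]; exact norm_sub_norm_le _ _
      _ ≤ ‖T k - L‖ * ‖c‖ := (T k - L).le_opNorm c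
      _ ≤ m / 2 * ‖c‖ := by gcongr
  linarith [hLK c hc]

end Cone

section ComplementarityCone

variable {ι κ : Type*}

variable (κ) in
def complementarityCone (y : ι → ℝ) : Set ((ι → ℝ) × (κ → ℝ)) :=
  {c | ∀ i, 0 ≤ c.1 i ∧ c.1 i * y i = 0}

theorem isClosed_complementarityCone (y : ι → ℝ) : IsClosed (complementarityCone κ y) := by
  simp only [complementarityCone, Set.ofPred_forall, Set.ofPred_and]
  exact isClosed_iInter fun i =>
    (isClosed_le continuous_const (by fun_prop)).inter (isClosed_eq (by fun_prop) continuous_const)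

theorem smul_mem_complementarityCone {y : ι → ℝ} {c : (ι → ℝ) × (κ → ℝ)}
    (hc : c ∈ complementarityCone κ y) {t : ℝ} (ht : 0 < t) :
    t • c ∈ complementarityCone κ y := fun i => by
  simp only [Prod.smul_fst, Pi.smul_apply, smul_eq_mul, mul_assoc, (hc i).2, mul_zero]
  exact ⟨mul_nonneg ht.le (hc i).1, trivial⟩

end ComplementarityCone

section Multipliers

variable {ι κ : Type*} [Fintype ι] [Fintype κ]

variable {F : Type*} [NormedAddCommGroup F] [NormedSpace ℝ F]

noncomputable def lagrangeMap (a : ι → F) (b : κ → F) : ((ι → ℝ) × (κ → ℝ)) →L[ℝ] F :=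
  ∑ i, ((ContinuousLinearMap.proj i).comp (ContinuousLinearMap.fst ℝ _ _)).smulRight (a i) +
    ∑ j, ((ContinuousLinearMap.proj j).comp (ContinuousLinearMap.snd ℝ _ _)).smulRight (b j)

@[simp]
theorem lagrangeMap_apply (a : ι → F) (b : κ → F) (c : (ι → ℝ) × (κ → ℝ)) :
    lagrangeMap a b c = ∑ i, c.1 i • a i + ∑ j, c.2 j • b j := by
  simp [lagrangeMap]

theorem continuous_lagrangeMap {X : Type*} [TopologicalSpace X] {a : X → ι → F}
    {b : X → κ → F} (ha : ∀ i, Continuous (a · i)) (hb : ∀ j, Continuous (b · j)) :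
    Continuous fun y => lagrangeMap (a y) (b y) :=
  continuous_clm_apply.2 fun c => by simp only [lagrangeMap_apply]; fun_prop

theorem eq_zero_of_lagrangeMap_apply_eq_zero {F : Type*} [NormedAddCommGroup F]
    [InnerProductSpace ℝ F] {a : ι → F} {b : κ → F} {y : ι → ℝ} {w : F}
    (hb : LinearIndependent ℝ b) (haw : ∀ i, y i = 0 → inner ℝ (a i) w < 0)
    (hbw : ∀ j, inner ℝ (b j) w = 0) {c : (ι → ℝ) × (κ → ℝ)}
    (hc : c ∈ complementarityCone κ y) (hLc : lagrangeMap a b c = 0) : c = 0 := by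
  have hinner : ∑ i, c.1 i * inner ℝ (a i) w = 0 := by
    simpa [inner_add_left, sum_inner, real_inner_smul_left, hbw] using
      congrArg (inner ℝ · w) hLc
  have hinactive : ∀ i, y i ≠ 0 → c.1 i = 0 := fun i hi =>
    (mul_eq_zero.1 (hc i).2).resolve_right hi
  have hterm_nonpos : ∀ i ∈ Finset.univ, c.1 i * inner ℝ (a i) w ≤ 0 := by
    intro i _
    by_cases hi : y i = 0
    · exact mul_nonpos_of_nonneg_of_nonpos (hc i).1 (haw i hi).le
    · simp [hinactive i hi]
  have hterm := (Finset.sum_eq_zero_iff_of_nonpos hterm_nonpos).1 hinner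
  have hμ : c.1 = 0 := funext fun i => by
    by_cases hi : y i = 0
    · exact (mul_eq_zero.1 (hterm i (Finset.mem_univ i))).resolve_right (haw i hi).ne
    · exact hinactive i hi
  refine Prod.ext hμ (funext (Fintype.linearIndependent_iff.1 hb c.2 ?_))
  simpa [hμ] using hLc

end Multipliers

theorem eventually_mul_eq_zero_of_tendsto {α : Type*} {l : Filter α} {u y : α → ℝ} {ybar : ℝ}
    (hy : Tendsto y l (𝓝 ybar)) (hybar : ybar ≤ 0) (hu : ∀ k, u k * y k = 0) :
    ∀ᶠ k in l, u k * ybar = 0 := by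
  rcases hybar.lt_or_eq with hneg | rfl
  · filter_upwards [hy.eventually (gt_mem_nhds hneg)] with k hk
    simp [(mul_eq_zero.1 (hu k)).resolve_right hk.ne]
  · simp

theorem exists_forall_norm_le_of_eventually {E : Type*} [Norm E] {u : ℕ → E} {M : ℝ}
    (hu : ∀ᶠ k in atTop, ‖u k‖ ≤ M) : ∃ B, ∀ k, ‖u k‖ ≤ B := by
  obtain ⟨B, hB⟩ := IsBoundedUnder.bddAbove_range (f := fun k => ‖u k‖) ⟨M, hu⟩
  exact ⟨B, fun k => hB ⟨k, rfl⟩⟩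

open Finset in
theorem stmt9_general {n r s : ℕ}
    (g : Fin r → EuclideanSpace ℝ (Fin n) → ℝ)
    (h : Fin s → EuclideanSpace ℝ (Fin n) → ℝ)
    (hg : ∀ i, ContDiff ℝ 1 (g i)) (hh : ∀ j, ContDiff ℝ 1 (h j))
    (Ω : Set (EuclideanSpace ℝ (Fin n)))
    (hΩ : Ω = {x | (∀ i, g i x ≤ 0) ∧ ∀ j, h j x = 0})
    (mfcq : ∀ x ∈ Ω,
      LinearIndependent ℝ (fun j => gradient (h j) x) ∧
      ∃ v : EuclideanSpace ℝ (Fin n),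
        (∀ i, g i x = 0 → (inner ℝ (gradient (g i) x) v : ℝ) < 0) ∧
        (∀ j, (inner ℝ (gradient (h j) x) v : ℝ) = 0))
    (x : ℕ → EuclideanSpace ℝ (Fin n))
    (xbar : EuclideanSpace ℝ (Fin n)) (hxbar : xbar ∈ Ω)
    (hconv : Filter.Tendsto x Filter.atTop (nhds xbar))
    (μ : ℕ → Fin r → ℝ) (κ : ℕ → Fin s → ℝ)
    (v : ℕ → EuclideanSpace ℝ (Fin n))
    (hv : ∀ k, v k = ∑ i, μ k i • gradient (g i) (x k)
                     + ∑ j, κ k j • gradient (h j) (x k))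
    (hμpos : ∀ k i, 0 ≤ μ k i)
    (hμcomp : ∀ k i, μ k i * g i (x k) = 0)
    (hvbdd : ∃ M : ℝ, ∀ k, ‖v k‖ ≤ M) :
    (∃ M : ℝ, ∀ k i, |μ k i| ≤ M) ∧ (∃ M : ℝ, ∀ k j, |κ k j| ≤ M) := by
  obtain ⟨M, hM⟩ := hvbdd
  set T := fun y => lagrangeMap (fun i => gradient (g i) y) (fun j => gradient (h j) y)
  set K := complementarityCone (Fin s) fun i => g i xbar
  have hT : Tendsto (fun k => T (x k)) atTop (𝓝 (T xbar)) :=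
    ((continuous_lagrangeMap (fun i => (hg i).continuous_gradient)
      (fun j => (hh j).continuous_gradient)).tendsto xbar).comp hconv
  have hgxbar : ∀ i, g i xbar ≤ 0 := (hΩ ▸ hxbar).1
  have hinj : ∀ c ∈ K, T xbar c = 0 → c = 0 := by
    obtain ⟨hlin, w, hgw, hhw⟩ := mfcq xbar hxbar
    exact fun c hc => eq_zero_of_lagrangeMap_apply_eq_zero hlin hgw hhw hc
  obtain ⟨m, hm, hmK⟩ := exists_pos_mul_norm_le_norm_apply (isClosed_complementarityCone _)
    (fun c hc t ht => smul_mem_complementarityCone hc ht) hinj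
  have hmem : ∀ᶠ k in atTop, (μ k, κ k) ∈ K := eventually_all.2 fun i => by
    have hgx : Tendsto (fun k => g i (x k)) atTop (𝓝 (g i xbar)) :=
      ((hg i).continuous.tendsto xbar).comp hconv
    filter_upwards [eventually_mul_eq_zero_of_tendsto hgx (hgxbar i) (hμcomp · i)] with k hk
    exact ⟨hμpos k i, hk⟩
  obtain ⟨B, hB⟩ : ∃ B, ∀ k, ‖(μ k, κ k)‖ ≤ B := by
    refine exists_forall_norm_le_of_eventually (M := 2 * M / m) ?_
    filter_upwards [eventually_mul_norm_le_norm_apply hm hmK hT, hmem] with k hk hkK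
    have hbound : m / 2 * ‖(μ k, κ k)‖ ≤ M := (hk _ hkK).trans (by simpa [T, hv] using hM k)
    rw [le_div_iff₀ hm]
    linarith
  exact ⟨⟨B, fun k i => (norm_le_pi_norm (μ k) i).trans ((norm_fst_le (μ k, κ k)).trans (hB k))⟩,
    ⟨B, fun k j => (norm_le_pi_norm (κ k) j).trans ((norm_snd_le (μ k, κ k)).trans (hB k))⟩⟩

open Finset in
/-- Under MFCQ, bounded sequences of normal-cone vectors have bounded Lagrange
multipliers. -/
theorem stmt9 {n r s : ℕ}
    (g : Fin r → EuclideanSpace ℝ (Fin n) → ℝ)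
    (h : Fin s → EuclideanSpace ℝ (Fin n) → ℝ)
    (hg : ∀ i, ContDiff ℝ 1 (g i)) (hh : ∀ j, ContDiff ℝ 1 (h j))
    (Ω : Set (EuclideanSpace ℝ (Fin n)))
    (hΩ : Ω = {x | (∀ i, g i x ≤ 0) ∧ ∀ j, h j x = 0})
    (mfcq : ∀ x ∈ Ω,
      LinearIndependent ℝ (fun j => gradient (h j) x) ∧
      ∃ v : EuclideanSpace ℝ (Fin n),
        (∀ i, g i x = 0 → (inner ℝ (gradient (g i) x) v : ℝ) < 0) ∧
        (∀ j, (inner ℝ (gradient (h j) x) v : ℝ) = 0))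
    (x : ℕ → EuclideanSpace ℝ (Fin n)) (hxΩ : ∀ k, x k ∈ Ω)
    (xbar : EuclideanSpace ℝ (Fin n)) (hxbar : xbar ∈ Ω)
    (hconv : Filter.Tendsto x Filter.atTop (nhds xbar))
    (μ : ℕ → Fin r → ℝ) (κ : ℕ → Fin s → ℝ)
    (v : ℕ → EuclideanSpace ℝ (Fin n))
    (hv : ∀ k, v k = ∑ i, μ k i • gradient (g i) (x k)
                     + ∑ j, κ k j • gradient (h j) (x k))
    (hμpos : ∀ k i, 0 ≤ μ k i)
    (hμcomp : ∀ k i, μ k i * g i (x k) = 0)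
    (hvbdd : ∃ M : ℝ, ∀ k, ‖v k‖ ≤ M) :
    (∃ M : ℝ, ∀ k i, |μ k i| ≤ M) ∧ (∃ M : ℝ, ∀ k j, |κ k j| ≤ M) :=
  stmt9_general g h hg hh Ω hΩ mfcq x xbar hxbar hconv μ κ v hv hμpos hμcomp hvbdd
end

section
/- Let F(x₁,x₂) = (x₂ - 1, x₁x₂ - 1) and ρ > 0, and let ψ(x) = (1/(2ρ))[(x₂-1)² + (x₁x₂-1)²]. Then ψ⁻¹(0) = {(1,1)}, and there do not exist constants c > 0 and α > 0 such that c · dist(x, ψ⁻¹(0)) ≤ ψ(x)^α for all x ∈ ℝ². (Witness: the sequence xᵏ = (k, 1/k), along which ψ(xᵏ) → 1/(2ρ) while dist(xᵏ, ψ⁻¹(0)) → ∞.) -/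
/-!
Both squares vanish only at `(1, 1)`. Along the hyperbola `x = (t, 1/t)` the second residual
`x₁x₂ - 1` vanishes identically, so `ψ` stays bounded by `1/(2ρ)` while `x` runs off to infinity;
no inequality `c · dist(x, ψ⁻¹(0)) ≤ ψ(x)^α` survives that.
-/

open Filter Metric

lemma sq_sub_one_add_sq_mul_sub_one_eq_zero_iff {a b : ℝ} :
    (b - 1) ^ 2 + (a * b - 1) ^ 2 = 0 ↔ a = 1 ∧ b = 1 := by
  constructor
  · intro h
    have hb : b = 1 := by nlinarith [sq_nonneg (b - 1), sq_nonneg (a * b - 1)]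
    subst hb
    constructor <;> nlinarith [sq_nonneg (a - 1)]
  · rintro ⟨rfl, rfl⟩
    norm_num

lemma not_exists_holder_errorBound_of_tendsto {E ι : Type*} [PseudoMetricSpace E]
    {l : Filter ι} [l.NeBot] {ψ : E → ℝ} {Z : Set E} {u : ι → E} {B : ℝ}
    (hbdd : ∀ᶠ i in l, ψ (u i) ∈ Set.Icc 0 B)
    (hdist : Tendsto (fun i => infDist (u i) Z) l atTop) :
    ¬ ∃ c > (0 : ℝ), ∃ α > (0 : ℝ), ∀ x, c * infDist x Z ≤ ψ x ^ α := by
  rintro ⟨c, hc, α, hα, hbound⟩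
  obtain ⟨i, hi, hlarge⟩ :=
    (hbdd.and ((hdist.const_mul_atTop hc).eventually_gt_atTop (B ^ α))).exists
  have hpow : ψ (u i) ^ α ≤ B ^ α := Real.rpow_le_rpow hi.1 hi.2 hα.le
  linarith [hbound (u i)]

/-- For `ψ(x₁,x₂) = (1/(2ρ))[(x₂-1)² + (x₁x₂-1)²]`, the zero set is the singleton
`{(1,1)}` and no global Hölder error bound `c · dist(x, ψ⁻¹(0)) ≤ ψ(x)^α` can hold. -/
theorem stmt13 (ρ : ℝ) (hρ : 0 < ρ)
    (ψ : EuclideanSpace ℝ (Fin 2) → ℝ)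
    (hψ : ∀ x, ψ x = 1 / (2 * ρ) * ((x 1 - 1) ^ 2 + (x 0 * x 1 - 1) ^ 2)) :
    ψ ⁻¹' {0} = {x : EuclideanSpace ℝ (Fin 2) | x 0 = 1 ∧ x 1 = 1} ∧
    ¬ ∃ c > (0 : ℝ), ∃ α > (0 : ℝ), ∀ x : EuclideanSpace ℝ (Fin 2),
        c * Metric.infDist x (ψ ⁻¹' {0}) ≤ ψ x ^ α := by
  have hzero : ψ ⁻¹' {0} = {x : EuclideanSpace ℝ (Fin 2) | x 0 = 1 ∧ x 1 = 1} := by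
    ext x
    simp [hψ, hρ.ne', sq_sub_one_add_sq_mul_sub_one_eq_zero_iff]
  refine ⟨hzero, ?_⟩
  let u : ℝ → EuclideanSpace ℝ (Fin 2) := fun t => !₂[t, t⁻¹]
  have hbdd : ∀ᶠ t in atTop, ψ (u t) ∈ Set.Icc 0 (1 / (2 * ρ)) := by
    filter_upwards [eventually_ge_atTop 1] with t ht
    have hψu : ψ (u t) = 1 / (2 * ρ) * (t⁻¹ - 1) ^ 2 := by
      simp [u, hψ, show t ≠ 0 by positivity]
    have ht' : t⁻¹ ∈ Set.Ioc 0 1 := ⟨by positivity, inv_le_one_of_one_le₀ ht⟩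
    rw [hψu]
    constructor
    · positivity
    · exact mul_le_of_le_one_right (by positivity) (by nlinarith [ht'.1, ht'.2])
  have hdist : ∀ t, t - 1 ≤ infDist (u t) (ψ ⁻¹' {0}) := by
    intro t
    rw [hzero, le_infDist ⟨!₂[1, 1], by simp⟩]
    rintro y ⟨hy0, -⟩
    calc t - 1 ≤ dist (u t 0) (y 0) := by simp [u, hy0, Real.dist_eq, le_abs_self]
      _ ≤ dist (u t) y := PiLp.dist_apply_le _ _ 0
  exact not_exists_holder_errorBound_of_tendsto hbdd
    (tendsto_atTop_mono hdist (tendsto_atTop_add_const_right _ _ tendsto_id))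
end

section
/- Let Ω ⊆ ℝⁿ be nonempty closed convex, F : ℝⁿ → ℝⁿ continuous and strongly monotone with modulus σ > 0 (⟨F(x) - F(y), x - y⟩ ≥ σ‖x-y‖² for all x,y), ρ > 0, and ψ the regularized gap function. If x* is the (unique) solution of the VI, then for every x ∈ Ω: ψ(x) ≥ ⟨F(x), x - x*⟩ - (ρ/2)‖x - x*‖² ≥ (σ - ρ/2)‖x - x*‖². In particular, if ρ < 2σ, then ψ(x) ≥ (σ - ρ/2)‖x - x*‖², i.e. a global error bound with exponent 1/2 holds on Ω. -/
/-! The bound on `ψ` is the value of the supremum at `y = x*`; the supremum is finite because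
`t ↦ ⟪v, t⟫ - (ρ/2)‖t‖²` is bounded above by `‖v‖²/(2ρ)`. The lower bound on `⟪F x, x - x*⟫`
combines strong monotonicity at `(x, x*)` with the variational inequality at `y = x`. -/

open RealInnerProductSpace

section

variable {E : Type*} [NormedAddCommGroup E] [InnerProductSpace ℝ E]

theorem inner_sub_half_mul_norm_sq_le (v w : E) {ρ : ℝ} (hρ : 0 < ρ) :
    ⟪v, w⟫ - ρ / 2 * ‖w‖ ^ 2 ≤ ‖v‖ ^ 2 / (2 * ρ) := by
  have hCS : ⟪v, w⟫ ≤ ‖v‖ * ‖w‖ := real_inner_le_norm v w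
  rw [le_div_iff₀ (by positivity)]
  nlinarith [sq_nonneg (‖v‖ - ρ * ‖w‖)]

theorem le_sSup_image_regGap (v x : E) {ρ : ℝ} (hρ : 0 < ρ) {Ω : Set E} {y : E} (hy : y ∈ Ω) :
    ⟪v, x - y⟫ - ρ / 2 * ‖x - y‖ ^ 2 ≤
      sSup ((fun y => ⟪v, x - y⟫ - ρ / 2 * ‖x - y‖ ^ 2) '' Ω) := by
  refine le_csSup ⟨‖v‖ ^ 2 / (2 * ρ), ?_⟩ ⟨y, hy, rfl⟩
  rintro _ ⟨z, -, rfl⟩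
  exact inner_sub_half_mul_norm_sq_le v (x - z) hρ

theorem mul_norm_sq_le_inner_of_strongMonotone_of_solution {F : E → E} {σ : ℝ}
    (hmono : ∀ x y, σ * ‖x - y‖ ^ 2 ≤ ⟪F x - F y, x - y⟫) {Ω : Set E} {xstar : E}
    (hsol : ∀ y ∈ Ω, 0 ≤ ⟪F xstar, y - xstar⟫) {x : E} (hx : x ∈ Ω) :
    σ * ‖x - xstar‖ ^ 2 ≤ ⟪F x, x - xstar⟫ := by
  have h := hmono x xstar
  rw [inner_sub_left] at h
  linarith [hsol x hx]

end

theorem stmt17_general {n : ℕ} (F : EuclideanSpace ℝ (Fin n) → EuclideanSpace ℝ (Fin n))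
    (Ω : Set (EuclideanSpace ℝ (Fin n)))
    (σ : ℝ)
    (hmono : ∀ x y, σ * ‖x - y‖ ^ 2 ≤ (inner ℝ (F x - F y) (x - y) : ℝ))
    (ρ : ℝ) (hρ : 0 < ρ)
    (ψ : EuclideanSpace ℝ (Fin n) → ℝ)
    (hψ : ∀ x, ψ x = sSup ((fun y => (inner ℝ (F x) (x - y) : ℝ) - ρ / 2 * ‖x - y‖ ^ 2) '' Ω))
    (xstar : EuclideanSpace ℝ (Fin n)) (hxstar : xstar ∈ Ω)
    (hsol : ∀ y ∈ Ω, 0 ≤ (inner ℝ (F xstar) (y - xstar) : ℝ)) :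
    ∀ x ∈ Ω,
      (inner ℝ (F x) (x - xstar) : ℝ) - ρ / 2 * ‖x - xstar‖ ^ 2 ≤ ψ x ∧
      (σ - ρ / 2) * ‖x - xstar‖ ^ 2 ≤
        (inner ℝ (F x) (x - xstar) : ℝ) - ρ / 2 * ‖x - xstar‖ ^ 2 := by
  intro x hx
  refine ⟨hψ x ▸ le_sSup_image_regGap (F x) x hρ hxstar, ?_⟩
  linarith [mul_norm_sq_le_inner_of_strongMonotone_of_solution hmono hsol hx]

/-- For strongly monotone `F` (modulus `σ`) with `0 < ρ < 2σ` and `x*` the solution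
of the VI, the regularized gap function satisfies
`ψ(x) ≥ ⟨F(x), x - x*⟩ - (ρ/2)‖x - x*‖² ≥ (σ - ρ/2)‖x - x*‖²` for all `x ∈ Ω`;
in particular a global error bound with exponent `1/2` holds on `Ω`. -/
theorem stmt17 {n : ℕ} (F : EuclideanSpace ℝ (Fin n) → EuclideanSpace ℝ (Fin n))
    (hF : Continuous F) (Ω : Set (EuclideanSpace ℝ (Fin n))) (hΩne : Ω.Nonempty)
    (hΩcl : IsClosed Ω) (hΩcv : Convex ℝ Ω)
    (σ : ℝ) (hσ : 0 < σ)
    (hmono : ∀ x y, σ * ‖x - y‖ ^ 2 ≤ (inner ℝ (F x - F y) (x - y) : ℝ))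
    (ρ : ℝ) (hρ : 0 < ρ) (hρσ : ρ < 2 * σ)
    (ψ : EuclideanSpace ℝ (Fin n) → ℝ)
    (hψ : ∀ x, ψ x = sSup ((fun y => (inner ℝ (F x) (x - y) : ℝ) - ρ / 2 * ‖x - y‖ ^ 2) '' Ω))
    (xstar : EuclideanSpace ℝ (Fin n)) (hxstar : xstar ∈ Ω)
    (hsol : ∀ y ∈ Ω, 0 ≤ (inner ℝ (F xstar) (y - xstar) : ℝ)) :
    ∀ x ∈ Ω,
      (inner ℝ (F x) (x - xstar) : ℝ) - ρ / 2 * ‖x - xstar‖ ^ 2 ≤ ψ x ∧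
      (σ - ρ / 2) * ‖x - xstar‖ ^ 2 ≤
        (inner ℝ (F x) (x - xstar) : ℝ) - ρ / 2 * ‖x - xstar‖ ^ 2 :=
  stmt17_general F Ω σ hmono ρ hρ ψ hψ xstar hxstar hsol
end
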